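/- Let Ae > 0, σ₀ > 0, σ > 0, C > 0, and define Z(C) = [ −Ae/(σ²+σ₀²) + √( A²e²/(σ²+σ₀²)² − (1/(σ²+σ₀²) − 1/σ₀²)·( A²e²/(σ²+σ₀²) − 2·log(C·σ₀/√(σ²+σ₀²)) ) ) ] / ( 1/σ₀² − 1/(σ²+σ₀²) ), assuming the expression under the square root is nonnegative. Then Z(C) < Ae/2 + ( √((σ₀²+σ²)·σ₀²) / (Ae) )·| log( C·σ₀/√(σ²+σ₀²) ) | (upper-bound step of Theorem 7). -/

import Mathlib

/-!
With `w = √((σ₀² + σ²) σ₀²)` and `L = log (C σ₀ / √(σ² + σ₀²))`, the denominator of `Z` is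
`σ² / w²`, so `Z = (w √(A²e² − 2σ²L) − Ae σ₀²) / σ²`. The square root is at most `Ae + σ²|L| / Ae`,
which produces the `|L|` term, and the strict AM–GM inequality `2w < (σ₀² + σ²) + σ₀²` bounds the
remaining term `Ae (w − σ₀²) / σ²` by `Ae / 2`.
-/

open Real

/-- The localizing threshold value `Z(C)` of Theorem 6. -/
noncomputable def Zfun (Ae σ σ0 C : ℝ) : ℝ :=
  (-(Ae / (σ ^ 2 + σ0 ^ 2)) +
      Real.sqrt (Ae ^ 2 / (σ ^ 2 + σ0 ^ 2) ^ 2 -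
        (1 / (σ ^ 2 + σ0 ^ 2) - 1 / σ0 ^ 2) *
          (Ae ^ 2 / (σ ^ 2 + σ0 ^ 2) -
            2 * Real.log (C * σ0 / Real.sqrt (σ ^ 2 + σ0 ^ 2))))) /
    (1 / σ0 ^ 2 - 1 / (σ ^ 2 + σ0 ^ 2))

theorem Zfun_eq_div_sq (Ae σ σ0 C : ℝ) (hσ0 : σ0 ≠ 0) (hσ : σ ≠ 0) :
    Zfun Ae σ σ0 C =
      (√((σ0 ^ 2 + σ ^ 2) * σ0 ^ 2) *
          √(Ae ^ 2 - 2 * σ ^ 2 * log (C * σ0 / √(σ ^ 2 + σ0 ^ 2))) - Ae * σ0 ^ 2) / σ ^ 2 := by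
  set L := log (C * σ0 / √(σ ^ 2 + σ0 ^ 2))
  have hs : σ ^ 2 + σ0 ^ 2 ≠ 0 := by positivity
  have hrad : Ae ^ 2 / (σ ^ 2 + σ0 ^ 2) ^ 2 -
      (1 / (σ ^ 2 + σ0 ^ 2) - 1 / σ0 ^ 2) * (Ae ^ 2 / (σ ^ 2 + σ0 ^ 2) - 2 * L) =
        (Ae ^ 2 - 2 * σ ^ 2 * L) / ((σ0 ^ 2 + σ ^ 2) * σ0 ^ 2) := by
    field_simp
    ring
  have hw : √((σ0 ^ 2 + σ ^ 2) * σ0 ^ 2) ≠ 0 := by positivity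
  have hw2 : √((σ0 ^ 2 + σ ^ 2) * σ0 ^ 2) ^ 2 = (σ0 ^ 2 + σ ^ 2) * σ0 ^ 2 :=
    sq_sqrt (by positivity)
  rw [Zfun, hrad, sqrt_div' _ (by positivity)]
  generalize √((σ0 ^ 2 + σ ^ 2) * σ0 ^ 2) = w at hw hw2 ⊢
  generalize √(Ae ^ 2 - 2 * σ ^ 2 * L) = x
  field_simp
  linear_combination -(σ ^ 2 * x) * hw2

theorem sqrt_sq_sub_le (a b L : ℝ) (ha : 0 < a) (hb : 0 ≤ b) :
    √(a ^ 2 - 2 * b * L) ≤ a + b * |L| / a := by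
  have hbL : 0 ≤ b * |L| / a := by positivity
  rw [sqrt_le_left (by positivity)]
  have hL : -L ≤ |L| := neg_le_abs L
  calc a ^ 2 - 2 * b * L ≤ a ^ 2 + 2 * (b * |L|) := by nlinarith
    _ = a ^ 2 + 2 * a * (b * |L| / a) := by field_simp
    _ ≤ (a + b * |L| / a) ^ 2 := by nlinarith

theorem two_mul_sqrt_mul_lt_add {s t : ℝ} (hs : 0 ≤ s) (ht : 0 ≤ t) (hst : s ≠ t) :
    2 * √(s * t) < s + t := by
  have hne : √s ≠ √t := fun h => hst (by rwa [sqrt_inj hs ht] at h)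
  have hpos : 0 < (√s - √t) ^ 2 := by positivity
  rw [sqrt_mul hs]
  nlinarith [sq_sqrt hs, sq_sqrt ht]

theorem stmt_16_general (Ae σ0 σ C : ℝ) (hAe : 0 < Ae) (hσ0 : 0 < σ0) (hσ : 0 < σ) :
    Zfun Ae σ σ0 C <
      Ae / 2 + Real.sqrt ((σ0 ^ 2 + σ ^ 2) * σ0 ^ 2) / Ae *
        |Real.log (C * σ0 / Real.sqrt (σ ^ 2 + σ0 ^ 2))| := by
  rw [Zfun_eq_div_sq Ae σ σ0 C hσ0.ne' hσ.ne', div_lt_iff₀ (by positivity)]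
  set L := log (C * σ0 / √(σ ^ 2 + σ0 ^ 2))
  set w := √((σ0 ^ 2 + σ ^ 2) * σ0 ^ 2)
  have hw : 0 ≤ w := sqrt_nonneg _
  have hx : √(Ae ^ 2 - 2 * σ ^ 2 * L) ≤ Ae + σ ^ 2 * |L| / Ae :=
    sqrt_sq_sub_le Ae (σ ^ 2) L hAe (sq_nonneg σ)
  have hamgm : 2 * w < (σ0 ^ 2 + σ ^ 2) + σ0 ^ 2 :=
    two_mul_sqrt_mul_lt_add (by positivity) (by positivity) (by nlinarith [pow_pos hσ 2])
  calc w * √(Ae ^ 2 - 2 * σ ^ 2 * L) - Ae * σ0 ^ 2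
      ≤ w * (Ae + σ ^ 2 * |L| / Ae) - Ae * σ0 ^ 2 := by gcongr
    _ = Ae * (w - σ0 ^ 2) + w / Ae * |L| * σ ^ 2 := by field_simp; ring
    _ < Ae * (σ ^ 2 / 2) + w / Ae * |L| * σ ^ 2 := by gcongr; linarith
    _ = (Ae / 2 + w / Ae * |L|) * σ ^ 2 := by ring

theorem stmt_16 (Ae σ0 σ C : ℝ) (hAe : 0 < Ae) (hσ0 : 0 < σ0) (hσ : 0 < σ) (hC : 0 < C)
    (hrad : 0 ≤ Ae ^ 2 / (σ ^ 2 + σ0 ^ 2) ^ 2 -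
      (1 / (σ ^ 2 + σ0 ^ 2) - 1 / σ0 ^ 2) *
        (Ae ^ 2 / (σ ^ 2 + σ0 ^ 2) -
          2 * Real.log (C * σ0 / Real.sqrt (σ ^ 2 + σ0 ^ 2)))) :
    Zfun Ae σ σ0 C <
      Ae / 2 + Real.sqrt ((σ0 ^ 2 + σ ^ 2) * σ0 ^ 2) / Ae *
        |Real.log (C * σ0 / Real.sqrt (σ ^ 2 + σ0 ^ 2))| :=
  stmt_16_general Ae σ0 σ C hAe hσ0 hσ
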